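/- arXiv:2003.01438 — 4 statements merged into one kernel-verified Lean document; each statement's English description precedes it below -/
import Mathlib

section
/- Let k be a field and S = k[x,y] a polynomial ring in 2 variables with maximal homogeneous ideal m = (x,y). For integers s ≥ 1 and n ≥ 0, the length of S/(m^{[s]} m^n) as an S-module is: s^2 + n^2 + n if 1 ≤ n ≤ s, and binom(n+s+1, 2) if n ≥ s. -/
/-!
Modulo a monomial ideal `I` with finitely many standard monomials (monomials outside `I`), a
standard monomial `xᵉ` that is maximal for divisibility is killed by every variable, so
`(I + (xᵉ)) ⧸ I ≅ S ⧸ m` is simple. Peeling these monomials off one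
at a time shows that the length of `S ⧸ I` is the number of standard monomials. For
`I = m^{[s]} mⁿ` these are the exponents `(a, b)` with `a + b < n + s` or `a, b < s`, which are
counted column by column.
-/

/-- The length of a module `M` over a ring `R`, defined as the Krull dimension of
its lattice of submodules (i.e. the supremum of lengths of strictly increasing
chains of submodules). -/
noncomputable def moduleLength (R : Type*) [Ring R] (M : Type*) [AddCommGroup M]
    [Module R M] : WithBot ℕ∞ :=
  Order.krullDim (Submodule R M)

open MvPolynomial Pointwise Finset

theorem Finsupp.mem_singleton_add_iff {σ : Type*} {a x : σ →₀ ℕ} {U : Set (σ →₀ ℕ)} :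
    x ∈ {a} + U ↔ a ≤ x ∧ x - a ∈ U := by
  rw [Set.singleton_add, Set.mem_image]
  constructor
  · rintro ⟨u, hu, rfl⟩
    exact ⟨le_self_add, by rwa [add_tsub_cancel_left]⟩
  · rintro ⟨hax, hx⟩
    exact ⟨x - a, hx, add_tsub_cancel_of_le hax⟩

theorem Finsupp.mem_pair_add_iff {σ : Type*} {a b x : σ →₀ ℕ} {U : Set (σ →₀ ℕ)} :
    x ∈ {a, b} + U ↔ (a ≤ x ∧ x - a ∈ U) ∨ (b ≤ x ∧ x - b ∈ U) := by
  rw [Set.insert_eq, Set.union_add, Set.mem_union, mem_singleton_add_iff, mem_singleton_add_iff]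

namespace MvPolynomial

section CommSemiring

variable {σ R : Type*} [CommSemiring R]

variable (R) in
noncomputable def monomialIdeal (A : Set (σ →₀ ℕ)) : Ideal (MvPolynomial σ R) :=
  Ideal.span ((fun e => monomial e 1) '' A)

theorem mem_monomialIdeal_iff {A : Set (σ →₀ ℕ)} (hA : IsUpperSet A)
    {p : MvPolynomial σ R} :
    p ∈ monomialIdeal R A ↔ ∀ e ∈ p.support, e ∈ A := by
  rw [monomialIdeal, mem_ideal_span_monomial_image]
  exact forall₂_congr fun e _ =>
    ⟨fun ⟨a, ha, hae⟩ => hA hae ha, fun he => ⟨e, he, le_rfl⟩⟩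

theorem monomialIdeal_mul (A B : Set (σ →₀ ℕ)) :
    monomialIdeal R A * monomialIdeal R B = monomialIdeal R (A + B) := by
  rw [monomialIdeal, monomialIdeal, Ideal.span_mul_span', monomialIdeal, ← Set.image2_mul,
    Set.image2_image_left, Set.image2_image_right, ← Set.image2_add, Set.image_image2]
  simp only [monomial_mul, mul_one]

theorem monomialIdeal_insert (e : σ →₀ ℕ) (A : Set (σ →₀ ℕ)) :
    monomialIdeal R (insert e A) = Ideal.span {monomial e 1} ⊔ monomialIdeal R A := by
  rw [monomialIdeal, Set.image_insert_eq, Ideal.span_insert, monomialIdeal]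

theorem span_X_pow_pair (i j : σ) (a b : ℕ) :
    Ideal.span {X i ^ a, X j ^ b} =
      monomialIdeal R {Finsupp.single i a, Finsupp.single j b} := by
  rw [monomialIdeal, Set.image_pair, X_pow_eq_monomial, X_pow_eq_monomial]

theorem mul_monomial_mem_monomialIdeal_iff {A : Set (σ →₀ ℕ)} (hA : IsUpperSet A)
    {e : σ →₀ ℕ} (he : e ∉ A) (hmax : ∀ f, e < f → f ∈ A) (p : MvPolynomial σ R) :
    p * monomial e 1 ∈ monomialIdeal R A ↔ constantCoeff p = 0 := by
  rw [mem_monomialIdeal_iff hA, constantCoeff_eq]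
  constructor
  · intro h
    by_contra h0
    refine he (h e ?_)
    rwa [mem_support_iff, coeff_mul_monomial', if_pos le_rfl, tsub_self, mul_one]
  · intro h0 f hf
    rw [mem_support_iff, coeff_mul_monomial'] at hf
    split_ifs at hf with hef
    · refine hmax f (lt_of_le_of_ne hef ?_)
      rintro rfl
      rw [tsub_self, h0, zero_mul] at hf
      exact hf rfl
    · exact absurd rfl hf

end CommSemiring

section Field

variable {σ k : Type*} [Field k]

theorem length_quotient_monomialIdeal_eq_one_add {A : Set (σ →₀ ℕ)} (hA : IsUpperSet A)
    {e : σ →₀ ℕ} (he : e ∉ A) (hmax : ∀ f, e < f → f ∈ A) :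
    Module.length (MvPolynomial σ k) (MvPolynomial σ k ⧸ monomialIdeal k A) =
      1 + Module.length (MvPolynomial σ k)
        (MvPolynomial σ k ⧸ monomialIdeal k (insert e A)) := by
  set I := monomialIdeal k A
  let φ := I.mkQ ∘ₗ LinearMap.toSpanSingleton _ _ (monomial e (1 : k))
  have hker : LinearMap.ker φ = RingHom.ker (constantCoeff : MvPolynomial σ k →+* k) := by
    ext p
    simp only [φ, LinearMap.mem_ker, LinearMap.coe_comp, Function.comp_apply,
      LinearMap.toSpanSingleton_apply, smul_eq_mul, Submodule.mkQ_apply,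
      Submodule.Quotient.mk_eq_zero, RingHom.mem_ker]
    exact mul_monomial_mem_monomialIdeal_iff hA he hmax p
  have hrange : LinearMap.range φ = Submodule.map I.mkQ (monomialIdeal k (insert e A)) := by
    rw [monomialIdeal_insert, Submodule.map_sup, Submodule.mkQ_map_self, sup_bot_eq,
      LinearMap.range_comp, ← LinearMap.span_singleton_eq_range]
  have hsimple : IsSimpleModule (MvPolynomial σ k) (LinearMap.range φ) := by
    have hmaximal : (RingHom.ker (constantCoeff : MvPolynomial σ k →+* k)).IsMaximal :=
      RingHom.ker_isMaximal_of_surjective _ fun c => ⟨C c, constantCoeff_C σ c⟩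
    have := isSimpleModule_iff_isCoatom.2 (Ideal.isMaximal_def.1 hmaximal)
    rw [← hker] at this
    exact IsSimpleModule.congr φ.quotKerEquivRange.symm
  have hle : I ≤ monomialIdeal k (insert e A) := by
    rw [monomialIdeal_insert]
    exact le_sup_right
  rw [Module.length_eq_add_of_exact _ _ (Submodule.injective_subtype _)
      (Submodule.mkQ_surjective (LinearMap.range φ)) (LinearMap.exact_subtype_mkQ _),
    Module.length_eq_one, hrange, (Submodule.quotientQuotientEquivQuotient I _ hle).length_eq]

theorem length_quotient_monomialIdeal {A : Set (σ →₀ ℕ)} (hA : IsUpperSet A)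
    (B : Finset (σ →₀ ℕ)) (hB : ∀ e, e ∈ B ↔ e ∉ A) :
    Module.length (MvPolynomial σ k) (MvPolynomial σ k ⧸ monomialIdeal k A) = #B := by
  classical
  induction B using Finset.strongInduction generalizing A with
  | H B ih =>
  rcases B.eq_empty_or_nonempty with rfl | hne
  · have h0 : (0 : σ →₀ ℕ) ∈ A := by simpa using hB 0
    have htop : monomialIdeal k A = ⊤ := by
      rw [Ideal.eq_top_iff_one, ← C_1, ← monomial_zero']
      exact Ideal.subset_span ⟨0, h0, rfl⟩
    rw [htop, card_empty, Nat.cast_zero, Module.length_eq_zero_iff]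
    infer_instance
  · obtain ⟨e, heB, he_max⟩ := B.exists_maximal hne
    have hgt : ∀ f, e < f → f ∈ A := fun f hef => by
      by_contra hf
      exact lt_irrefl e (hef.trans_le (he_max ((hB f).2 hf) hef.le))
    have hA' : IsUpperSet (insert e A) := by
      rintro a b hab (rfl | ha)
      · rcases hab.eq_or_lt with rfl | hab
        · exact Set.mem_insert _ _
        · exact Set.mem_insert_of_mem _ (hgt b hab)
      · exact Set.mem_insert_of_mem _ (hA hab ha)
    have hB' : ∀ f, f ∈ B.erase e ↔ f ∉ insert e A := fun f => by
      rw [mem_erase, hB, Set.mem_insert_iff, not_or]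
    rw [length_quotient_monomialIdeal_eq_one_add hA ((hB e).1 heB) hgt,
      ih _ (erase_ssubset heB) hA' hB', ← card_erase_add_one heB, Nat.cast_succ, add_comm]

end Field

end MvPolynomial

theorem Finset.sum_range_tsub_of_le {N M : ℕ} (h : N ≤ M) :
    ∑ a ∈ range M, (N - a) = (N + 1).choose 2 := by
  obtain ⟨d, rfl⟩ := Nat.exists_eq_add_of_le h
  rw [sum_range_add]
  simp only [Nat.sub_add_eq, Nat.sub_self, Nat.zero_sub, sum_const_zero, add_zero]
  induction N with
  | zero => simp
  | succ N ih =>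
    rw [sum_range_succ', Nat.sub_zero, Nat.choose_succ_succ' (N + 1), Nat.choose_one_right]
    simp only [Nat.add_sub_add_right]
    rw [ih (Nat.le_add_right _ _)]
    ring

theorem Nat.two_mul_choose_two (n : ℕ) : 2 * (n + 1).choose 2 = (n + 1) * n := by
  have := Nat.add_one_mul_choose_eq n 1
  rw [Nat.choose_one_right] at this
  linarith

def standardExponents (s n : ℕ) : Finset (ℕ × ℕ) :=
  (range (n + s) ×ˢ range (n + s)).filter
    fun p => ¬(n + s ≤ p.1 + p.2 ∧ (s ≤ p.1 ∨ s ≤ p.2))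

theorem card_standardExponents (s n : ℕ) :
    #(standardExponents s n) =
      ∑ a ∈ range (n + s), if a < s then max (n + s - a) s else n + s - a := by
  rw [standardExponents, card_filter, sum_product]
  refine sum_congr rfl fun a _ => ?_
  rw [← card_filter, ← card_range (if a < s then _ else _)]
  congr 1
  ext b
  simp only [mem_filter, mem_range]
  split_ifs <;> omega

theorem card_standardExponents_of_le (s n : ℕ) (h : s ≤ n) :
    #(standardExponents s n) = (n + s + 1).choose 2 := by
  rw [card_standardExponents, ← sum_range_tsub_of_le le_rfl]
  refine sum_congr rfl fun a _ => ?_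
  split_ifs <;> omega

theorem card_standardExponents_of_ge (s n : ℕ) (h : n ≤ s) :
    #(standardExponents s n) = s ^ 2 + n ^ 2 + n := by
  rw [card_standardExponents, add_comm n s, sum_range_add]
  have hfirst : ∑ a ∈ range s, (if a < s then max (s + n - a) s else s + n - a) =
      ∑ a ∈ range s, (s + (n - a)) :=
    sum_congr rfl fun a ha => by rw [if_pos (mem_range.1 ha)]; omega
  have hsecond :
      ∑ x ∈ range n, (if s + x < s then max (s + n - (s + x)) s else s + n - (s + x)) =
        ∑ x ∈ range n, (n - x) :=
    sum_congr rfl fun x _ => by rw [if_neg (by omega)]; omega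
  rw [hfirst, hsecond, sum_add_distrib, sum_const, card_range, smul_eq_mul,
    sum_range_tsub_of_le h, sum_range_tsub_of_le le_rfl]
  have := Nat.two_mul_choose_two n
  nlinarith

section TwoVariables

variable {k : Type*} [Field k]

theorem span_X_pair_pow (n : ℕ) :
    Ideal.span {X 0, X 1} ^ n =
      monomialIdeal k {e : Fin 2 →₀ ℕ | n ≤ e 0 + e 1} := by
  induction n with
  | zero =>
    rw [pow_zero, Ideal.one_eq_top, eq_comm, Ideal.eq_top_iff_one, ← C_1, ← monomial_zero']
    exact Ideal.subset_span ⟨0, Nat.zero_le _, rfl⟩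
  | succ n ih =>
    have hm : Ideal.span {X 0, X 1} =
        monomialIdeal k {Finsupp.single (0 : Fin 2) 1, Finsupp.single 1 1} := by
      simpa only [pow_one] using span_X_pow_pair (R := k) (0 : Fin 2) 1 1 1
    rw [pow_succ', ih, hm, monomialIdeal_mul]
    congr 1
    ext f
    simp only [Finsupp.mem_pair_add_iff, Finsupp.single_le_iff, Set.mem_ofPred_eq,
      Finsupp.coe_tsub, Pi.sub_apply, Finsupp.single_eq_same, ne_eq, one_ne_zero,
      not_false_eq_true, Finsupp.single_eq_of_ne, zero_ne_one, tsub_zero]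
    omega

theorem span_X_pow_pair_mul_span_X_pair_pow (s n : ℕ) :
    Ideal.span {X 0 ^ s, X 1 ^ s} * Ideal.span {X 0, X 1} ^ n =
      monomialIdeal k
        {e : Fin 2 →₀ ℕ | n + s ≤ e 0 + e 1 ∧ (s ≤ e 0 ∨ s ≤ e 1)} := by
  rw [span_X_pair_pow, span_X_pow_pair, monomialIdeal_mul]
  congr 1
  ext f
  simp only [Finsupp.mem_pair_add_iff, Finsupp.single_le_iff, Set.mem_ofPred_eq,
    Finsupp.coe_tsub, Pi.sub_apply, Finsupp.single_eq_same, ne_eq, one_ne_zero,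
    not_false_eq_true, Finsupp.single_eq_of_ne, zero_ne_one, tsub_zero]
  omega

theorem length_quotient_span_X_pow_pair_mul_span_X_pair_pow (s n : ℕ) :
    Module.length (MvPolynomial (Fin 2) k) (MvPolynomial (Fin 2) k ⧸
        (Ideal.span {X 0 ^ s, X 1 ^ s} * Ideal.span {X 0, X 1} ^ n :
          Ideal (MvPolynomial (Fin 2) k))) =
      #(standardExponents s n) := by
  have hA : IsUpperSet {e : Fin 2 →₀ ℕ | n + s ≤ e 0 + e 1 ∧ (s ≤ e 0 ∨ s ≤ e 1)} :=
    fun a b hab ⟨hdeg, hcorner⟩ => by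
      have := hab 0
      have := hab 1
      exact ⟨by omega, by omega⟩
  let exponent : ℕ × ℕ ≃ (Fin 2 →₀ ℕ) :=
    (finTwoArrowEquiv ℕ).symm.trans Finsupp.equivFunOnFinite.symm
  rw [span_X_pow_pair_mul_span_X_pair_pow,
    length_quotient_monomialIdeal hA ((standardExponents s n).map exponent.toEmbedding), card_map]
  intro e
  have hcoord : exponent.symm e = (e 0, e 1) := rfl
  rw [mem_map_equiv, hcoord, standardExponents, mem_filter, mem_product, mem_range, mem_range,
    Set.mem_ofPred_eq]
  omega

end TwoVariables

theorem stmt0_general (k : Type*) [Field k] (s n : ℕ)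
    (m frob : Ideal (MvPolynomial (Fin 2) k))
    (hm : m = Ideal.span {MvPolynomial.X 0, MvPolynomial.X 1})
    (hfrob : frob = Ideal.span {MvPolynomial.X 0 ^ s, MvPolynomial.X 1 ^ s}) :
    (1 ≤ n → n ≤ s →
      moduleLength (MvPolynomial (Fin 2) k) (MvPolynomial (Fin 2) k ⧸ (frob * m ^ n)) =
        ((s ^ 2 + n ^ 2 + n : ℕ) : ℕ∞)) ∧
    (s ≤ n →
      moduleLength (MvPolynomial (Fin 2) k) (MvPolynomial (Fin 2) k ⧸ (frob * m ^ n)) =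
        (((n + s + 1).choose 2 : ℕ) : ℕ∞)) := by
  subst hm hfrob
  simp only [moduleLength, ← Module.coe_length,
    length_quotient_span_X_pow_pair_mul_span_X_pair_pow]
  exact ⟨fun _ h => by rw [card_standardExponents_of_ge s n h],
    fun h => by rw [card_standardExponents_of_le s n h]⟩

/-- Let `S = k[x,y]` with maximal homogeneous ideal `m = (x,y)`.
For `s ≥ 1` and `n ≥ 0`, the length of `S/(m^{[s]} m^n)` is `s² + n² + n` when
`1 ≤ n ≤ s`, and `C(n+s+1, 2)` when `n ≥ s`. Here `m^{[s]} = (xˢ, yˢ)`. -/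
theorem stmt0 (k : Type*) [Field k] (s n : ℕ) (hs : 1 ≤ s)
    (m frob : Ideal (MvPolynomial (Fin 2) k))
    (hm : m = Ideal.span {MvPolynomial.X 0, MvPolynomial.X 1})
    (hfrob : frob = Ideal.span {MvPolynomial.X 0 ^ s, MvPolynomial.X 1 ^ s}) :
    (1 ≤ n → n ≤ s →
      moduleLength (MvPolynomial (Fin 2) k) (MvPolynomial (Fin 2) k ⧸ (frob * m ^ n)) =
        ((s ^ 2 + n ^ 2 + n : ℕ) : ℕ∞)) ∧
    (s ≤ n →
      moduleLength (MvPolynomial (Fin 2) k) (MvPolynomial (Fin 2) k ⧸ (frob * m ^ n)) =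
        (((n + s + 1).choose 2 : ℕ) : ℕ∞)) :=
  stmt0_general k s n m frob hm hfrob
end

section
/- Let k be a field, S = k[x_1,…,x_r] a polynomial ring, and let I_1,…,I_α (α ≥ 2) be ideals of S each generated by monomials. Let Q be a further monomial ideal of S such that S/Q has finite length as an S-module. Then ℓ(S/((I_1 ∩ ⋯ ∩ I_α) + Q)) = Σ_{∅ ≠ A ⊆ {1,…,α}} (-1)^{|A|+1} ℓ(S/((Σ_{i∈A} I_i) + Q)). -/
/-- The length of a module `M` over a ring `R` as a natural number: the Krull
dimension of its lattice of submodules (which is finite for modules of finite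
length), read off as a natural number. -/
noncomputable def flength (R : Type*) [Ring R] (M : Type*) [AddCommGroup M]
    [Module R M] : ℕ :=
  (WithBot.unbotD 0 (Order.krullDim (Submodule R M))).toNat



section ModularChain

variable {α : Type*} [Lattice α] [IsModularLattice α]

/-- A covering series regarded as an `LTSeries`. -/
def covToLT (s : RelSeries {(a, b) : α × α | a ⋖ b}) : LTSeries α :=
  s.ofLE fun ⟨_, _⟩ h => CovBy.lt h

@[simp] lemma covToLT_length (s : RelSeries {(a, b) : α × α | a ⋖ b}) :
    (covToLT s).length = s.length := rfl
@[simp] lemma covToLT_head (s : RelSeries {(a, b) : α × α | a ⋖ b}) :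
    (covToLT s).head = s.head := rfl
@[simp] lemma covToLT_last (s : RelSeries {(a, b) : α × α | a ⋖ b}) :
    (covToLT s).last = s.last := rfl

lemma chain_le_cov : ∀ (n : ℕ) (s : RelSeries {(a, b) : α × α | a ⋖ b}), s.length = n →
    ∀ p : LTSeries α, s.head ≤ p.head → p.last ≤ s.last → p.length ≤ n := by
  intro n
  induction n with
  | zero =>
    intro s hs p h1 h2
    have hsl : s.head = s.last := by
      show s.toFun 0 = s.toFun (Fin.last _)
      congr 1
      ext
      simp [hs]
    by_contra hlen
    have hpos : (0 : Fin (p.length + 1)) < Fin.last _ := by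
      simp only [Fin.lt_def, Fin.val_zero, Fin.val_last]; omega
    exact absurd (lt_of_lt_of_le (p.strictMono hpos) (h2.trans (hsl ▸ h1))) (lt_irrefl _)
  | succ n ih =>
    intro s hs p h1 h2
    classical
    have hslen : s.length ≠ 0 := by omega
    have hs'len : s.eraseLast.length = n := by
      simp [RelSeries.eraseLast, hs]
    set c := s.eraseLast.last with hc
    have hcb : c ⋖ s.last := s.eraseLast_last_rel_last hslen
    have hac : s.head ≤ c := by
      have := (covToLT s.eraseLast).head_le_last
      exact this
    set m := p.length with hm
    set P : ℕ → α := fun i => p ⟨min i m, by omega⟩ with hP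
    have hPmono : ∀ i j : ℕ, i ≤ j → P i ≤ P j := fun i j h =>
      p.monotone (by simp only [Fin.mk_le_mk]; omega)
    have hPlt : ∀ i, i < m → P i < P (i + 1) := fun i h =>
      p.strictMono (by simp only [Fin.mk_lt_mk]; omega)
    have hPhead : P 0 = p.head := by
      show p _ = p 0
      congr 1
    have hPlast : P m = p.last := by
      show p _ = p (Fin.last _)
      congr 1
      ext; simp [hm]
    have hPb : ∀ i, P i ≤ s.last := fun i => by
      have h : P i ≤ p.last := by
        rw [← RelSeries.apply_last]
        exact p.monotone (by simp only [Fin.le_def, Fin.val_last]; omega)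
      exact h.trans h2
    have hsup : ∀ i, ¬ P i ≤ c → P i ⊔ c = s.last := by
      intro i hi
      rcases hcb.eq_or_eq le_sup_right (sup_le (hPb i) hcb.lt.le) with h | h
      · exact absurd (le_of_sup_eq (sup_comm c (P i) ▸ h)) hi
      · exact h
    have hstep : ∀ i, ¬ P i ≤ c → i + 1 ≤ m → P i ⊓ c < P (i + 1) ⊓ c := by
      intro i hi him
      have hi1 : ¬ P (i + 1) ≤ c := fun h => hi ((hPmono i (i + 1) (Nat.le_succ i)).trans h)
      refine lt_of_le_of_ne (inf_le_inf_right _ (hPmono i (i + 1) (Nat.le_succ i)))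
        (fun heq => ?_)
      have := eq_of_le_of_inf_le_of_sup_le (hPlt i (by omega)).le (le_of_eq heq.symm)
        (by rw [hsup _ hi1, hsup _ hi])
      exact absurd this (hPlt i (by omega)).ne
    by_cases hc0 : P 0 ≤ c
    · set j := Nat.findGreatest (fun i => P i ≤ c) m with hj
      have hjle : j ≤ m := Nat.findGreatest_le m
      have hjspec : P j ≤ c := Nat.findGreatest_spec (P := fun i => P i ≤ c) (Nat.zero_le m) hc0
      have hjmax : ∀ i, j < i → i ≤ m → ¬ P i ≤ c := fun i hh1 hh2 =>
        Nat.findGreatest_is_greatest (P := fun i => P i ≤ c) hh1 hh2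
      rcases eq_or_lt_of_le hjle with hjm | hjm
      · have hlastc : p.last ≤ c := hPlast ▸ (hjm ▸ hjspec)
        have := ih s.eraseLast hs'len p (by simpa using h1) hlastc
        omega
      · set Z : ℕ → α := fun i => if i ≤ j then P i else P (i + 1) ⊓ c with hZ
        have hZlt : ∀ i, i < m - 1 → Z i < Z (i + 1) := by
          intro i hi
          rcases lt_trichotomy (i + 1) (j + 1) with h | h | h
          · have h1j : i + 1 ≤ j := by omega
            simp only [hZ, if_pos h1j, if_pos (by omega : i ≤ j)]
            exact hPlt i (by omega)
          · have hij : i = j := by omega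
            simp only [hZ, hij, if_pos (le_refl j), if_neg (by omega : ¬ j + 1 ≤ j)]
            have e1 : P j ≤ P (j + 1) ⊓ c := le_inf (hPmono j (j + 1) (by omega)) hjspec
            have e2 : P (j + 1) ⊓ c < P (j + 2) ⊓ c :=
              hstep (j + 1) (hjmax _ (by omega) (by omega)) (by omega)
            exact lt_of_le_of_lt e1 e2
          · simp only [hZ, if_neg (by omega : ¬ i ≤ j), if_neg (by omega : ¬ i + 1 ≤ j)]
            exact hstep (i + 1) (hjmax _ (by omega) (by omega)) (by omega)
        let q : LTSeries α := LTSeries.mk (m - 1) (fun i => Z i)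
          (Fin.strictMono_iff_lt_succ.mpr (fun i => by
            simpa using hZlt i (by omega)))
        have hqhead : q.head = p.head := by
          show Z ((0 : Fin (m - 1 + 1)) : ℕ) = p.head
          have : ((0 : Fin (m - 1 + 1)) : ℕ) = 0 := rfl
          rw [this]
          simp only [hZ, if_pos (Nat.zero_le j)]
          exact hPhead
        have hqlast : q.last ≤ c := by
          show Z ((Fin.last (m - 1)) : ℕ) ≤ c
          have hv : ((Fin.last (m - 1)) : ℕ) = m - 1 := rfl
          rw [hv]
          by_cases hcase : m - 1 ≤ j
          · simp only [hZ, if_pos hcase]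
            exact (hPmono (m - 1) j hcase).trans hjspec
          · simp only [hZ, if_neg hcase]
            exact inf_le_right
        have := ih s.eraseLast hs'len q (by simpa [hqhead] using h1) hqlast
        have hq : q.length = m - 1 := rfl
        omega
    · have hnone : ∀ i, ¬ P i ≤ c := fun i h => hc0 ((hPmono 0 i (Nat.zero_le i)).trans h)
      let q : LTSeries α := LTSeries.mk m (fun i => P i ⊓ c)
        (Fin.strictMono_iff_lt_succ.mpr (fun i => by
          simpa using hstep i (hnone i) (by omega)))
      have hqhead : s.eraseLast.head ≤ q.head := by
        show s.eraseLast.head ≤ P 0 ⊓ c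
        exact le_inf (by simpa [hPhead] using h1) (by simpa using hac)
      have hqlast : q.last ≤ c := inf_le_right
      have := ih s.eraseLast hs'len q hqhead hqlast
      have hq : q.length = m := rfl
      omega

end ModularChain


section Dim

variable {α : Type*} [Lattice α] [IsModularLattice α] [BoundedOrder α]

lemma krullDim_eq_covlen (s : RelSeries {(a, b) : α × α | a ⋖ b})
    (hb : s.head = ⊥) (ht : s.last = ⊤) :
    Order.krullDim α = s.length := by
  apply le_antisymm
  · rw [Order.krullDim]
    apply iSup_le
    intro p
    have := chain_le_cov s.length s rfl p (hb ▸ bot_le) (ht ▸ le_top)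
    exact_mod_cast this
  · have := Order.LTSeries.length_le_krullDim (covToLT s)
    exact_mod_cast this

end Dim

section FL

variable {R M : Type*} [Ring R] [AddCommGroup M] [Module R M]

lemma flength_eq_covlen (s : RelSeries {(a, b) : Submodule R M × Submodule R M | a ⋖ b})
    (hb : s.head = ⊥) (ht : s.last = ⊤) : flength R M = s.length := by
  rw [flength, krullDim_eq_covlen s hb ht]
  rw [show ((s.length : ℕ) : WithBot ℕ∞) = ((s.length : ℕ∞) : WithBot ℕ∞) from rfl,
    WithBot.unbotD_coe, ENat.toNat_coe]

lemma exists_cov_series (R M : Type*) [Ring R] [AddCommGroup M] [Module R M]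
    [IsNoetherian R M] [IsArtinian R M] :
    ∃ s : RelSeries {(a, b) : Submodule R M × Submodule R M | a ⋖ b},
      s.head = ⊥ ∧ s.last = ⊤ := by
  obtain ⟨f, f0, n, fn, hc⟩ := exists_covBy_seq_of_wellFoundedLT_wellFoundedGT (Submodule R M)
  exact ⟨⟨n, fun i => f i, fun i => hc i i.2⟩, f0.eq_bot, fn.eq_top⟩

lemma flength_congr {N : Type*} [AddCommGroup N] [Module R N] (e : M ≃ₗ[R] N) :
    flength R M = flength R N := by
  rw [flength, flength, Order.krullDim_eq_of_orderIso (Submodule.orderIsoMapComap e)]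

end FL

section Add

variable {R M : Type*} [Ring R] [AddCommGroup M] [Module R M] (N : Submodule R M)

lemma range_mapSubtype_emb :
    Set.range (Submodule.MapSubtype.orderEmbedding N) = Set.Iic N := by
  ext x
  simp only [Set.mem_range, Set.mem_Iic]
  constructor
  · rintro ⟨y, rfl⟩
    rw [Submodule.map_subtype_embedding_eq]
    exact (Submodule.map_subtype_le N y)
  · intro hx
    exact ⟨Submodule.comap N.subtype x, by
      rw [Submodule.map_subtype_embedding_eq, Submodule.map_comap_subtype,
        inf_eq_right.mpr hx]⟩

lemma range_comapMkQ_emb :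
    Set.range (Submodule.comapMkQOrderEmbedding N) = Set.Ici N := by
  ext x
  simp only [Set.mem_range, Set.mem_Ici]
  constructor
  · rintro ⟨y, rfl⟩
    rw [Submodule.comapMkQOrderEmbedding_eq]
    exact Submodule.le_comap_mkQ N y
  · intro hx
    exact ⟨Submodule.map N.mkQ x, by
      rw [Submodule.comapMkQOrderEmbedding_eq, Submodule.comap_map_mkQ,
        sup_eq_right.mpr hx]⟩

lemma covBy_map_subtype {x y : Submodule R N} (h : x ⋖ y) :
    Submodule.map N.subtype x ⋖ Submodule.map N.subtype y := by
  have := (Set.OrdConnected.apply_covBy_apply_iff (Submodule.MapSubtype.orderEmbedding N)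
    (by rw [range_mapSubtype_emb]; exact Set.ordConnected_Iic)).mpr h
  simpa [Submodule.map_subtype_embedding_eq] using this

lemma covBy_comap_mkQ {x y : Submodule R (M ⧸ N)} (h : x ⋖ y) :
    Submodule.comap N.mkQ x ⋖ Submodule.comap N.mkQ y := by
  have := (Set.OrdConnected.apply_covBy_apply_iff (Submodule.comapMkQOrderEmbedding N)
    (by rw [range_comapMkQ_emb]; exact Set.ordConnected_Ici)).mpr h
  simpa [Submodule.comapMkQOrderEmbedding_eq] using this

end Add

section Add2
variable {R M : Type*} [Ring R] [AddCommGroup M] [Module R M]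

lemma flength_add [IsNoetherian R M] [IsArtinian R M] (N : Submodule R M) :
    flength R M = flength R N + flength R (M ⧸ N) := by
  obtain ⟨s₁, hb₁, ht₁⟩ := exists_cov_series R N
  obtain ⟨s₂, hb₂, ht₂⟩ := exists_cov_series R (M ⧸ N)
  let f₁ : SetRel.Hom {(a, b) : Submodule R N × Submodule R N | a ⋖ b}
      {(a, b) : Submodule R M × Submodule R M | a ⋖ b} :=
    ⟨fun x => Submodule.map N.subtype x, fun h => covBy_map_subtype N h⟩
  let f₂ : SetRel.Hom {(a, b) : Submodule R (M ⧸ N) × Submodule R (M ⧸ N) | a ⋖ b}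
      {(a, b) : Submodule R M × Submodule R M | a ⋖ b} :=
    ⟨fun x => Submodule.comap N.mkQ x, fun h => covBy_comap_mkQ N h⟩
  have hconn : (s₁.map f₁).last = (s₂.map f₂).head := by
    rw [RelSeries.last_map, RelSeries.head_map, ht₁, hb₂]
    show Submodule.map N.subtype ⊤ = Submodule.comap N.mkQ ⊥
    rw [Submodule.map_subtype_top, Submodule.comap_bot, Submodule.ker_mkQ]
  let t := (s₁.map f₁).smash (s₂.map f₂) hconn
  have hM : flength R M = t.length := by
    apply flength_eq_covlen t
    · rw [RelSeries.head_smash, RelSeries.head_map, hb₁]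
      exact Submodule.map_bot _
    · rw [RelSeries.last_smash, RelSeries.last_map, ht₂]
      exact Submodule.comap_top _
  have hN : flength R N = s₁.length := flength_eq_covlen s₁ hb₁ ht₁
  have hQ : flength R (M ⧸ N) = s₂.length := flength_eq_covlen s₂ hb₂ ht₂
  have ht : t.length = s₁.length + s₂.length := rfl
  omega

end Add2

section Ideals
variable {R : Type*} [CommRing R]

lemma len_add_ideal (a b : Ideal R) (hfl : IsFiniteLength R (R ⧸ (a ⊓ b))) :
    flength R (R ⧸ a) + flength R (R ⧸ b)
      = flength R (R ⧸ (a ⊓ b)) + flength R (R ⧸ (a ⊔ b)) := by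
  obtain ⟨hnoe, hart⟩ := isFiniteLength_iff_isNoetherian_isArtinian.mp hfl
  set K : Ideal R := a ⊓ b with hK
  set A : Submodule R (R ⧸ K) := Submodule.map K.mkQ a with hA
  set B : Submodule R (R ⧸ K) := Submodule.map K.mkQ b with hB
  -- quotient isos
  have eA : ((R ⧸ K) ⧸ A) ≃ₗ[R] R ⧸ a :=
    Submodule.quotientQuotientEquivQuotient K a inf_le_left
  have eB : ((R ⧸ K) ⧸ B) ≃ₗ[R] R ⧸ b :=
    Submodule.quotientQuotientEquivQuotient K b inf_le_right
  have eAB : (((R ⧸ K) ⧸ A) ⧸ (Submodule.map A.mkQ B)) ≃ₗ[R] R ⧸ (a ⊔ b) := by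
    have e₁ : (((R ⧸ K) ⧸ A) ⧸ (Submodule.map A.mkQ B)) ≃ₗ[R] (R ⧸ K) ⧸ (A ⊔ B) :=
      Submodule.quotientQuotientEquivQuotientSup A B
    have hABsup : A ⊔ B = Submodule.map K.mkQ (a ⊔ b) := (Submodule.map_sup a b K.mkQ).symm
    have e₂ : ((R ⧸ K) ⧸ (A ⊔ B)) ≃ₗ[R] R ⧸ (a ⊔ b) := by
      rw [hABsup]
      exact Submodule.quotientQuotientEquivQuotient K (a ⊔ b)
        (le_trans inf_le_left le_sup_left)
    exact e₁.trans e₂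
  -- A ⊓ B = ⊥
  have hinf : A ⊓ B = ⊥ := by
    have h1 : A ⊓ B = Submodule.map K.mkQ (Submodule.comap K.mkQ (A ⊓ B)) := by
      rw [Submodule.map_comap_eq, Submodule.range_mkQ, top_inf_eq]
    rw [h1, Submodule.comap_inf, hA, hB, Submodule.comap_map_mkQ, Submodule.comap_map_mkQ,
      sup_eq_right.mpr inf_le_left, sup_eq_right.mpr inf_le_right, ← hK]
    exact Submodule.mkQ_map_self K
  -- B ≃ image of B in (R⧸K)⧸A
  have eBmap : B ≃ₗ[R] (Submodule.map A.mkQ B) := by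
    have hker : LinearMap.ker (A.mkQ ∘ₗ B.subtype) = ⊥ := by
      rw [LinearMap.ker_comp, Submodule.ker_mkQ]
      rw [Submodule.eq_bot_iff]
      rintro x hx
      have : (x : R ⧸ K) ∈ A ⊓ B := ⟨hx, x.2⟩
      rw [hinf] at this
      exact Subtype.ext this
    refine (LinearEquiv.ofInjective (A.mkQ ∘ₗ B.subtype)
      (LinearMap.ker_eq_bot.mp hker)).trans (LinearEquiv.ofEq _ _ ?_)
    rw [LinearMap.range_comp, Submodule.range_subtype]
  have h1 : flength R (R ⧸ K) = flength R A + flength R (R ⧸ a) := by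
    rw [flength_add A, flength_congr eA]
  have h2 : flength R (R ⧸ K) = flength R B + flength R (R ⧸ b) := by
    rw [flength_add B, flength_congr eB]
  have h3 : flength R (R ⧸ a) = flength R B + flength R (R ⧸ (a ⊔ b)) := by
    rw [← flength_congr eA, flength_add (Submodule.map A.mkQ B), flength_congr eAB,
      flength_congr eBmap]
  omega

end Ideals

section Monomial
open MvPolynomial
variable {k : Type*} [CommRing k] {σ : Type*}

noncomputable def mspan (G : Set (σ →₀ ℕ)) : Ideal (MvPolynomial σ k) :=
  Ideal.span ((fun e => monomial e (1 : k)) '' G)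

def IsMono (J : Ideal (MvPolynomial σ k)) : Prop := ∃ G, J = mspan G

lemma mem_mspan {G : Set (σ →₀ ℕ)} {p : MvPolynomial σ k} :
    p ∈ mspan G ↔ ∀ m ∈ p.support, ∃ g ∈ G, g ≤ m :=
  mem_ideal_span_monomial_image

lemma mspan_sup (G G' : Set (σ →₀ ℕ)) :
    (mspan G ⊔ mspan G' : Ideal (MvPolynomial σ k)) = mspan (G ∪ G') := by
  rw [mspan, mspan, mspan, Set.image_union, Ideal.span_union]

lemma mspan_inf (G G' : Set (σ →₀ ℕ)) :
    (mspan G ⊓ mspan G' : Ideal (MvPolynomial σ k)) = mspan (Set.image2 (· ⊔ ·) G G') := by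
  ext p
  rw [Submodule.mem_inf, mem_mspan, mem_mspan, mem_mspan]
  constructor
  · rintro ⟨h1, h2⟩ m hm
    obtain ⟨g, hg, hgm⟩ := h1 m hm
    obtain ⟨g', hg', hgm'⟩ := h2 m hm
    exact ⟨g ⊔ g', Set.mem_image2_of_mem hg hg', sup_le hgm hgm'⟩
  · intro h
    constructor
    · intro m hm
      obtain ⟨h', hmem, hle⟩ := h m hm
      obtain ⟨g, hg, g', hg', rfl⟩ := hmem
      exact ⟨g, hg, le_trans le_sup_left hle⟩
    · intro m hm
      obtain ⟨h', hmem, hle⟩ := h m hm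
      obtain ⟨g, hg, g', hg', rfl⟩ := hmem
      exact ⟨g', hg', le_trans le_sup_right hle⟩

lemma isMono_bot : IsMono (⊥ : Ideal (MvPolynomial σ k)) :=
  ⟨∅, by rw [mspan, Set.image_empty, Ideal.span_empty]⟩

lemma IsMono.sup {a b : Ideal (MvPolynomial σ k)} (ha : IsMono a) (hb : IsMono b) :
    IsMono (a ⊔ b) := by
  obtain ⟨G, rfl⟩ := ha; obtain ⟨G', rfl⟩ := hb
  exact ⟨G ∪ G', mspan_sup G G'⟩

lemma IsMono.inf {a b : Ideal (MvPolynomial σ k)} (ha : IsMono a) (hb : IsMono b) :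
    IsMono (a ⊓ b) := by
  obtain ⟨G, rfl⟩ := ha; obtain ⟨G', rfl⟩ := hb
  exact ⟨_, mspan_inf G G'⟩

lemma mono_distrib {a b q : Ideal (MvPolynomial σ k)} (ha : IsMono a) (hb : IsMono b)
    (hq : IsMono q) : (a ⊓ b) ⊔ q = (a ⊔ q) ⊓ (b ⊔ q) := by
  obtain ⟨G₁, rfl⟩ := ha; obtain ⟨G₂, rfl⟩ := hb; obtain ⟨G₃, rfl⟩ := hq
  rw [mspan_inf, mspan_sup, mspan_sup, mspan_sup, mspan_inf]
  ext p
  rw [mem_mspan, mem_mspan]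
  constructor
  · intro h m hm
    obtain ⟨g, hg, hle⟩ := h m hm
    rcases hg with hg | hg
    · obtain ⟨g₁, hg₁, g₂, hg₂, rfl⟩ := hg
      exact ⟨g₁ ⊔ g₂, Set.mem_image2_of_mem (Set.mem_union_left _ hg₁)
        (Set.mem_union_left _ hg₂), hle⟩
    · exact ⟨g ⊔ g, Set.mem_image2_of_mem (Set.mem_union_right _ hg)
        (Set.mem_union_right _ hg), by simpa using hle⟩
  · intro h m hm
    obtain ⟨g, hg, hle⟩ := h m hm
    obtain ⟨g₁, hg₁, g₂, hg₂, rfl⟩ := hg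
    rcases hg₁ with hg₁ | hg₁
    · rcases hg₂ with hg₂ | hg₂
      · exact ⟨g₁ ⊔ g₂, Set.mem_union_left _ (Set.mem_image2_of_mem hg₁ hg₂), hle⟩
      · exact ⟨g₂, Set.mem_union_right _ hg₂, le_trans le_sup_right hle⟩
    · exact ⟨g₁, Set.mem_union_right _ hg₁, le_trans le_sup_left hle⟩

lemma isMono_sum {ι : Type*} (B : Finset ι) (f : ι → Ideal (MvPolynomial σ k))
    (hf : ∀ i ∈ B, IsMono (f i)) : IsMono (∑ i ∈ B, f i) := by
  induction B using Finset.cons_induction with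
  | empty => simpa using isMono_bot
  | cons a B ha ih =>
    rw [Finset.sum_cons, Submodule.add_eq_sup]
    exact (hf a (Finset.mem_cons_self a B)).sup
      (ih fun i hi => hf i (Finset.mem_cons_of_mem hi))

lemma isMono_biInf {ι : Type*} (A : Finset ι) (hA : A.Nonempty)
    (f : ι → Ideal (MvPolynomial σ k)) (hf : ∀ i ∈ A, IsMono (f i)) :
    IsMono (⨅ i ∈ A, f i) := by
  induction hA using Finset.Nonempty.cons_induction with
  | singleton a => simpa [Finset.iInf_singleton] using hf a (Finset.mem_singleton_self a)
  | cons a A ha hA ih =>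
    classical
    rw [Finset.cons_eq_insert, Finset.iInf_insert]
    exact (hf a (by simp)).inf (ih fun i hi => hf i (by simp [hi]))

lemma mono_sup_biInf {ι : Type*} (A : Finset ι) (hA : A.Nonempty)
    (u : Ideal (MvPolynomial σ k)) (hu : IsMono u)
    (f : ι → Ideal (MvPolynomial σ k)) (hf : ∀ i ∈ A, IsMono (f i)) :
    u ⊔ ⨅ i ∈ A, f i = ⨅ i ∈ A, (u ⊔ f i) := by
  induction hA using Finset.Nonempty.cons_induction with
  | singleton a => simp [Finset.iInf_singleton]
  | cons a A ha hA ih =>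
    classical
    rw [Finset.cons_eq_insert, Finset.iInf_insert, Finset.iInf_insert,
      ← ih fun i hi => hf i (by simp [hi]), sup_comm u _,
      mono_distrib (hf a (by simp)) (isMono_biInf A hA f fun i hi => hf i (by simp [hi])) hu,
      sup_comm _ u, sup_comm _ u]

lemma sum_sup_eq {ι : Type*} (B : Finset ι) (hB : B.Nonempty)
    (u : Ideal (MvPolynomial σ k)) (f : ι → Ideal (MvPolynomial σ k)) :
    ∑ i ∈ B, (u ⊔ f i) = u ⊔ ∑ i ∈ B, f i := by
  induction hB using Finset.Nonempty.cons_induction with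
  | singleton a => simp
  | cons a B ha hB ih =>
    rw [Finset.sum_cons, Finset.sum_cons, ih, Submodule.add_eq_sup, Submodule.add_eq_sup,
      sup_sup_sup_comm, sup_idem]

end Monomial

section Main
open MvPolynomial

variable {k : Type*} [Field k] {r : ℕ}

local notation "S" => MvPolynomial (Fin r) k

lemma fl_of_ge (Q x : Ideal S) (hfin : IsFiniteLength S (S ⧸ Q)) (h : Q ≤ x) :
    IsFiniteLength S (S ⧸ x) := by
  obtain ⟨hnoe, hart⟩ := isFiniteLength_iff_isNoetherian_isArtinian.mp hfin
  have e := Submodule.quotientQuotientEquivQuotient Q x h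
  exact e.isFiniteLength (isFiniteLength_iff_isNoetherian_isArtinian.mpr
    ⟨inferInstance, inferInstance⟩)

lemma main_ind (Q : Ideal S) (hQ : IsMono Q) (hfin : IsFiniteLength S (S ⧸ Q))
    {ι : Type*} :
    ∀ (A : Finset ι), A.Nonempty → ∀ (I : ι → Ideal S), (∀ i ∈ A, IsMono (I i)) →
      (flength S (S ⧸ ((⨅ i ∈ A, I i) ⊔ Q)) : ℤ)
        = ∑ B ∈ A.powerset.filter (fun B => B.Nonempty),
            (-1 : ℤ) ^ (B.card + 1) * (flength S (S ⧸ ((∑ i ∈ B, I i) ⊔ Q)) : ℤ) := by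
  intro A
  induction A using Finset.cons_induction with
  | empty => intro h; exact absurd h (by simp)
  | cons a A ha ih =>
    intro _ I hI
    classical
    rcases A.eq_empty_or_nonempty with rfl | hA
    · rw [Finset.cons_empty]
      rw [show (⨅ i ∈ ({a} : Finset ι), I i) = I a from by simp]
      rw [show ({a} : Finset ι).powerset.filter (fun B => B.Nonempty) = {{a}} from by
        ext B
        simp only [Finset.mem_filter, Finset.mem_powerset, Finset.subset_singleton_iff,
          Finset.mem_singleton, Finset.nonempty_iff_ne_empty]
        constructor
        · rintro ⟨h1 | h1, h2⟩
          · exact absurd h1 h2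
          · exact h1
        · rintro rfl
          exact ⟨Or.inr rfl, by simp⟩]
      rw [Finset.sum_singleton, Finset.sum_singleton, Finset.card_singleton]
      norm_num
    · have hIa : IsMono (I a) := hI a (Finset.mem_cons_self a A)
      have hIA : ∀ i ∈ A, IsMono (I i) := fun i hi => hI i (Finset.mem_cons_of_mem hi)
      have hV : IsMono (⨅ i ∈ A, I i) := isMono_biInf A hA I hIA
      have hiInf : (⨅ i ∈ Finset.cons a A ha, I i) = I a ⊓ ⨅ i ∈ A, I i := by
        rw [Finset.cons_eq_insert, Finset.iInf_insert]
      have hfl : IsFiniteLength S (S ⧸ ((I a ⊔ Q) ⊓ ((⨅ i ∈ A, I i) ⊔ Q))) := by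
        rw [← mono_distrib hIa hV hQ]
        exact fl_of_ge Q _ hfin le_sup_right
      have key2 : (flength S (S ⧸ ((I a ⊓ ⨅ i ∈ A, I i) ⊔ Q)) : ℤ)
          = (flength S (S ⧸ (I a ⊔ Q)) : ℤ) + (flength S (S ⧸ ((⨅ i ∈ A, I i) ⊔ Q)) : ℤ)
            - (flength S (S ⧸ ((I a ⊔ ⨅ i ∈ A, I i) ⊔ Q)) : ℤ) := by
        have h0 := len_add_ideal (I a ⊔ Q) ((⨅ i ∈ A, I i) ⊔ Q) hfl
        have e1 : (I a ⊔ Q) ⊓ ((⨅ i ∈ A, I i) ⊔ Q) = (I a ⊓ ⨅ i ∈ A, I i) ⊔ Q :=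
          (mono_distrib hIa hV hQ).symm
        have e2 : (I a ⊔ Q) ⊔ ((⨅ i ∈ A, I i) ⊔ Q) = (I a ⊔ ⨅ i ∈ A, I i) ⊔ Q := by
          rw [sup_sup_sup_comm, sup_idem]
        rw [e1, e2] at h0
        omega
      have hdist : I a ⊔ ⨅ i ∈ A, I i = ⨅ i ∈ A, (I a ⊔ I i) :=
        mono_sup_biInf A hA (I a) hIa I hIA
      have hIH := ih hA I hIA
      have hIH2 := ih hA (fun i => I a ⊔ I i) (fun i hi => hIa.sup (hIA i hi))
      -- RHS manipulation
      have hfe : A.powerset.filter (fun B => B.Nonempty) = A.powerset.erase ∅ := by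
        ext B
        simp only [Finset.mem_filter, Finset.mem_erase, Finset.nonempty_iff_ne_empty]
        exact and_comm
      set F : Finset ι → ℤ := fun B =>
        if B.Nonempty then
          (-1 : ℤ) ^ (B.card + 1) * (flength S (S ⧸ ((∑ i ∈ B, I i) ⊔ Q)) : ℤ)
        else 0 with hF
      have hRHS : ∑ B ∈ (Finset.cons a A ha).powerset.filter (fun B => B.Nonempty),
            (-1 : ℤ) ^ (B.card + 1) * (flength S (S ⧸ ((∑ i ∈ B, I i) ⊔ Q)) : ℤ)
          = ∑ B ∈ A.powerset, F B + ∑ B ∈ A.powerset, F (insert a B) := by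
        rw [Finset.sum_filter, Finset.cons_eq_insert, Finset.sum_powerset_insert ha]
      have h1 : ∑ B ∈ A.powerset, F B
          = (flength S (S ⧸ ((⨅ i ∈ A, I i) ⊔ Q)) : ℤ) := by
        rw [hF, ← Finset.sum_filter, ← hIH]
      have h2 : ∀ B ∈ A.powerset, F (insert a B)
          = (-1 : ℤ) ^ B.card * (flength S (S ⧸ ((I a ⊔ ∑ i ∈ B, I i) ⊔ Q)) : ℤ) := by
        intro B hB
        have haB : a ∉ B := fun h => ha (Finset.mem_powerset.mp hB h)
        rw [hF]
        simp only [Finset.insert_nonempty, if_pos]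
        rw [Finset.card_insert_of_notMem haB, Finset.sum_insert haB, Submodule.add_eq_sup]
        rw [show ((-1 : ℤ)) ^ (B.card + 1 + 1) = (-1) ^ B.card from by
          rw [pow_succ, pow_succ]; ring]
      have h4 : ∑ B ∈ A.powerset, F (insert a B)
          = (flength S (S ⧸ (I a ⊔ Q)) : ℤ)
            - (flength S (S ⧸ ((I a ⊔ ⨅ i ∈ A, I i) ⊔ Q)) : ℤ) := by
        rw [Finset.sum_congr rfl h2,
          ← Finset.add_sum_erase _ _ (Finset.empty_mem_powerset A)]
        have hterm : ∀ B ∈ A.powerset.filter (fun B => B.Nonempty),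
            (-1 : ℤ) ^ B.card * (flength S (S ⧸ ((I a ⊔ ∑ i ∈ B, I i) ⊔ Q)) : ℤ)
            = -((-1 : ℤ) ^ (B.card + 1)
                * (flength S (S ⧸ ((∑ i ∈ B, (I a ⊔ I i)) ⊔ Q)) : ℤ)) := by
          intro B hB
          obtain ⟨hBsub, hBne⟩ := Finset.mem_filter.mp hB
          rw [sum_sup_eq B hBne (I a) I, pow_succ]
          ring
        rw [← hfe, Finset.sum_congr rfl hterm, Finset.sum_neg_distrib, ← hIH2, ← hdist]
        simp only [Finset.sum_empty, Finset.card_empty, pow_zero, one_mul]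
        show (flength S (S ⧸ ((I a ⊔ ∑ i ∈ (∅ : Finset ι), I i) ⊔ Q)) : ℤ) + _ = _
        rw [Finset.sum_empty, show (0 : Ideal S) = ⊥ from rfl, sup_bot_eq]
        ring
      rw [hiInf, key2, hRHS, h1, h4, hIH]
      ring

end Main


/-- Let `S = k[x₁,…,x_r]` and `I₁,…,I_α` (`α ≥ 2`) monomial ideals.
Let `Q` be a monomial ideal with `S/Q` of finite length. Then
`ℓ(S/((I₁ ∩ ⋯ ∩ I_α) + Q)) = Σ_{∅ ≠ A ⊆ {1,…,α}} (-1)^{|A|+1} ℓ(S/((Σ_{i∈A} I_i) + Q))`. -/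
theorem stmt3 (k : Type*) [Field k] (r α : ℕ) (hα : 2 ≤ α)
    (I : Fin α → Ideal (MvPolynomial (Fin r) k))
    (hI : ∀ i, ∃ G : Set (Fin r →₀ ℕ),
      I i = Ideal.span ((fun e => MvPolynomial.monomial e (1 : k)) '' G))
    (Q : Ideal (MvPolynomial (Fin r) k))
    (hQ : ∃ G : Set (Fin r →₀ ℕ),
      Q = Ideal.span ((fun e => MvPolynomial.monomial e (1 : k)) '' G))
    (hfin : IsFiniteLength (MvPolynomial (Fin r) k) (MvPolynomial (Fin r) k ⧸ Q)) :
    (flength (MvPolynomial (Fin r) k)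
        (MvPolynomial (Fin r) k ⧸ ((⨅ i, I i) + Q)) : ℤ) =
      ∑ A ∈ Finset.univ.powerset.filter (fun A : Finset (Fin α) => A.Nonempty),
        (-1 : ℤ) ^ (A.card + 1) *
          (flength (MvPolynomial (Fin r) k)
            (MvPolynomial (Fin r) k ⧸ ((∑ i ∈ A, I i) + Q)) : ℤ) := by
  have hNE : (Finset.univ : Finset (Fin α)).Nonempty :=
    ⟨⟨0, by omega⟩, Finset.mem_univ _⟩
  have hQm : IsMono Q := hQ
  have h := main_ind Q hQm hfin Finset.univ hNE I (fun i _ => hI i)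
  have hUniv : (⨅ i ∈ Finset.univ, I i) = ⨅ i, I i := by
    simp
  rw [hUniv] at h
  simp only [Submodule.add_eq_sup]
  rw [h]
end

section
/- Let k be a field, S = k[x_1,…,x_r] a polynomial ring with maximal homogeneous ideal m = (x_1,…,x_r), and let P_1,…,P_α (α ≥ 2) be distinct ideals of S, each generated by a subset of {x_1,…,x_r}. Let I = P_1 ∩ ⋯ ∩ P_α. Then for all integers s ≥ 1 and n ≥ 0, ℓ(S/(I + m^{[s]} m^n)) = Σ_{∅ ≠ A ⊆ {1,…,α}} (-1)^{|A|+1} ℓ(S/((Σ_{i∈A} P_i) + m^{[s]} m^n)). -/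
open MvPolynomial Pointwise

namespace Stmt4Aux

variable {k : Type*} [Field k] {r : ℕ}

/-- The monomial ideal with exponent set `T`. -/
noncomputable def mI (k : Type*) [Field k] (r : ℕ) (T : Set (Fin r →₀ ℕ)) :
    Ideal (MvPolynomial (Fin r) k) :=
  Ideal.span ((fun d => monomial d (1 : k)) '' T)

lemma mem_mI {T : Set (Fin r →₀ ℕ)} {p : MvPolynomial (Fin r) k} :
    p ∈ mI k r T ↔ ∀ d ∈ p.support, ∃ e ∈ T, e ≤ d :=
  MvPolynomial.mem_ideal_span_monomial_image

lemma monomial_mem_mI {T : Set (Fin r →₀ ℕ)} {d : Fin r →₀ ℕ} (h : ∃ e ∈ T, e ≤ d) :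
    monomial d (1 : k) ∈ mI k r T := by
  classical
  rw [mem_mI]
  intro d' hd'
  rw [MvPolynomial.support_monomial, if_neg one_ne_zero, Finset.mem_singleton] at hd'
  subst hd'; exact h

lemma mI_le {T₁ T₂ : Set (Fin r →₀ ℕ)} (h : ∀ e ∈ T₁, ∃ e' ∈ T₂, e' ≤ e) :
    mI k r T₁ ≤ mI k r T₂ := by
  rw [mI, Ideal.span_le]
  rintro _ ⟨d, hd, rfl⟩
  exact monomial_mem_mI (h d hd)

/-- Upward closure of a set of exponents. -/
def upClose (T : Set (Fin r →₀ ℕ)) : Set (Fin r →₀ ℕ) := {d | ∃ e ∈ T, e ≤ d}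

lemma upClose_up {T : Set (Fin r →₀ ℕ)} ⦃d e : Fin r →₀ ℕ⦄
    (hd : d ∈ upClose T) (hde : d ≤ e) : e ∈ upClose T := by
  obtain ⟨e', he', hle⟩ := hd
  exact ⟨e', he', hle.trans hde⟩

lemma mI_upClose (T : Set (Fin r →₀ ℕ)) : mI k r (upClose T) = mI k r T := by
  refine le_antisymm (mI_le ?_) (mI_le ?_)
  · rintro e ⟨e', he', hle⟩; exact ⟨e', he', hle⟩
  · intro e he; exact ⟨e, ⟨e, he, le_rfl⟩, le_rfl⟩

lemma mI_union (T₁ T₂ : Set (Fin r →₀ ℕ)) :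
    mI k r (T₁ ∪ T₂) = mI k r T₁ + mI k r T₂ := by
  rw [mI, mI, mI, Set.image_union, Ideal.span_union, Submodule.add_eq_sup]

lemma mI_mul (T₁ T₂ : Set (Fin r →₀ ℕ)) :
    mI k r T₁ * mI k r T₂ = mI k r (T₁ + T₂) := by
  rw [mI, mI, mI, Ideal.span_mul_span']
  congr 1
  ext p
  constructor
  · rintro ⟨_, ⟨a, ha, rfl⟩, _, ⟨b, hb, rfl⟩, rfl⟩
    exact ⟨a + b, Set.add_mem_add ha hb, by simp [monomial_mul]⟩
  · rintro ⟨_, ⟨a, ha, b, hb, rfl⟩, rfl⟩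
    exact ⟨monomial a 1, ⟨a, ha, rfl⟩, monomial b 1, ⟨b, hb, rfl⟩,
      by simp [monomial_mul]⟩

lemma mI_top {T : Set (Fin r →₀ ℕ)} (h : (0 : Fin r →₀ ℕ) ∈ T) : mI k r T = ⊤ := by
  rw [Ideal.eq_top_iff_one, mem_mI]
  intro d _
  exact ⟨0, h, zero_le⟩






lemma degree_add (a b : Fin r →₀ ℕ) :
    Finsupp.degree (a + b) = Finsupp.degree a + Finsupp.degree b := by
  simp only [Finsupp.degree_eq_weight_one, map_add]

lemma degree_single (j : Fin r) (e : ℕ) : Finsupp.degree (Finsupp.single j e) = e := by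
  rw [Finsupp.degree_eq_weight_one, Finsupp.weight_apply, Finsupp.sum_single_index] <;> simp

lemma degree_lt_of_lt {d e : Fin r →₀ ℕ} (h : d < e) :
    Finsupp.degree d < Finsupp.degree e := by
  have h1 : d + (e - d) = e := by
    rw [add_comm]; exact tsub_add_cancel_of_le h.le
  have h2 : e - d ≠ 0 := by
    intro h0
    rw [h0, add_zero] at h1
    exact h.ne h1
  calc Finsupp.degree d < Finsupp.degree d + Finsupp.degree (e - d) := by
        have := (Finsupp.degree_eq_zero_iff (e - d)).not.mpr h2
        omega
    _ = Finsupp.degree e := by rw [← degree_add, h1]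

lemma exists_le_degree_aux (n : ℕ) :
    ∀ kk : ℕ, ∀ c : Fin r →₀ ℕ, Finsupp.degree c = n + kk → ∃ b ≤ c, Finsupp.degree b = n := by
  intro kk
  induction kk with
  | zero => intro c hc; exact ⟨c, le_rfl, by omega⟩
  | succ kk ih =>
    intro c hc
    have hc0 : c ≠ 0 := by
      intro h0; rw [h0, map_zero] at hc; omega
    obtain ⟨j, hj⟩ := Finsupp.ne_iff.mp hc0
    simp only [Finsupp.coe_zero, Pi.zero_apply] at hj
    have hle : Finsupp.single j 1 ≤ c := Finsupp.single_le_iff.mpr (by omega)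
    have hdc : Finsupp.degree (c - Finsupp.single j 1) = n + kk := by
      have h1 : (c - Finsupp.single j 1) + Finsupp.single j 1 = c := tsub_add_cancel_of_le hle
      have := degree_add (c - Finsupp.single j 1) (Finsupp.single j 1)
      rw [h1, degree_single] at this
      omega
    obtain ⟨b, hb, hbd⟩ := ih _ hdc
    exact ⟨b, hb.trans tsub_le_self, hbd⟩

lemma exists_le_degree {n : ℕ} {c : Fin r →₀ ℕ} (h : n ≤ Finsupp.degree c) :
    ∃ b ≤ c, Finsupp.degree b = n :=
  exists_le_degree_aux n (Finsupp.degree c - n) c (by omega)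





/-- exponents of degree `n`. -/
def Dset (r n : ℕ) : Set (Fin r →₀ ℕ) := {d | Finsupp.degree d = n}

lemma span_X_eq_mI (V : Set (Fin r)) :
    Ideal.span (MvPolynomial.X '' V : Set (MvPolynomial (Fin r) k)) =
      mI k r ((fun j => Finsupp.single j 1) '' V) := by
  rw [mI, Set.image_image]
  rfl

lemma span_range_X_eq_mI :
    Ideal.span (Set.range (MvPolynomial.X : Fin r → MvPolynomial (Fin r) k)) =
      mI k r (Set.range fun j => Finsupp.single j 1) := by
  rw [← Set.image_univ, span_X_eq_mI, Set.image_univ]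

lemma span_range_X_pow_eq_mI (s : ℕ) :
    Ideal.span (Set.range fun j => (MvPolynomial.X j : MvPolynomial (Fin r) k) ^ s) =
      mI k r (Set.range fun j => Finsupp.single j s) := by
  rw [mI, ← Set.range_comp]
  congr 1
  ext p
  simp only [Set.mem_range, Function.comp]
  exact exists_congr fun j => by rw [X_pow_eq_monomial]





lemma mI_pow (n : ℕ) : (mI k r (Dset r 1)) ^ n = mI k r (Dset r n) := by
  induction n with
  | zero =>
    rw [pow_zero, eq_comm, Ideal.one_eq_top, mI_top]
    simp [Dset]
  | succ n ih =>
    rw [pow_succ, ih, mI_mul]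
    congr 1
    ext d
    constructor
    · rintro ⟨a, ha, b, hb, rfl⟩
      simp only [Dset, Set.mem_setOf_eq] at ha hb ⊢
      rw [degree_add, ha, hb]
    · intro hd
      simp only [Dset, Set.mem_setOf_eq] at hd
      obtain ⟨b, hb, hbd⟩ := exists_le_degree (n := n) (c := d) (by omega)
      refine ⟨b, hbd, d - b, ?_, ?_⟩
      · have h1 : b + (d - b) = d := by rw [add_comm]; exact tsub_add_cancel_of_le hb
        have := degree_add b (d - b)
        rw [h1, hbd] at this
        simp only [Dset, Set.mem_setOf_eq]
        omega
      · show b + (d - b) = d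
        rw [add_comm]; exact tsub_add_cancel_of_le hb

lemma mI_D1 :
    mI k r (Set.range fun j => Finsupp.single j 1) = mI k r (Dset r 1) := by
  refine le_antisymm (mI_le ?_) (mI_le ?_)
  · rintro _ ⟨j, rfl⟩
    exact ⟨Finsupp.single j 1, by simp [Dset, degree_single], le_rfl⟩
  · intro e he
    simp only [Dset, Set.mem_setOf_eq] at he
    have he0 : e ≠ 0 := by intro h; rw [h, map_zero] at he; omega
    obtain ⟨j, hj⟩ := Finsupp.ne_iff.mp he0
    simp only [Finsupp.coe_zero, Pi.zero_apply] at hj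
    exact ⟨Finsupp.single j 1, ⟨j, rfl⟩, Finsupp.single_le_iff.mpr (by omega)⟩

/-- The generator exponents of `frob * m ^ n`. -/
def genF (r s n : ℕ) : Set (Fin r →₀ ℕ) := (Set.range fun j => Finsupp.single j s) + Dset r n

lemma frob_mul_pow_eq_mI (s n : ℕ) (m frob : Ideal (MvPolynomial (Fin r) k))
    (hm : m = Ideal.span (Set.range MvPolynomial.X))
    (hfrob : frob = Ideal.span (Set.range fun i => MvPolynomial.X i ^ s)) :
    frob * m ^ n = mI k r (genF r s n) := by
  rw [hm, hfrob, span_range_X_pow_eq_mI, span_range_X_eq_mI, mI_D1, mI_pow, mI_mul]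
  rfl

/-- The (finite) complement: exponents of standard monomials modulo `frob * m^n`. -/
def Wset (r s n : ℕ) : Set (Fin r →₀ ℕ) := {d | ¬ ∃ e ∈ genF r s n, e ≤ d}

lemma Wset_finite (s n : ℕ) (hs : 1 ≤ s) : (Wset r s n).Finite := by
  apply Set.Finite.subset (Finsupp.finite_of_degree_le (r * s + n))
  intro d hd
  simp only [Set.mem_setOf_eq]
  by_contra hdeg
  push_neg at hdeg
  apply hd
  -- find a variable with exponent ≥ s
  have hj : ∃ j, s ≤ d j := by
    by_contra hall
    push_neg at hall
    have : Finsupp.degree d ≤ r * (s - 1) := by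
      rw [Finsupp.degree]
      calc ∑ i ∈ d.support, d i ≤ ∑ _i ∈ d.support, (s - 1) :=
            Finset.sum_le_sum fun i _ => by have := hall i; omega
        _ = d.support.card * (s - 1) := by rw [Finset.sum_const, smul_eq_mul]
        _ ≤ r * (s - 1) := by
            have : d.support.card ≤ r := by
              simpa using Finset.card_le_univ (s := d.support)
            exact Nat.mul_le_mul_right _ this
    have hr1 : r * (s - 1) ≤ r * s := Nat.mul_le_mul_left _ (by omega)
    omega
  obtain ⟨j, hj⟩ := hj
  have hrpos : 1 ≤ r := j.pos
  have hle : Finsupp.single j s ≤ d := Finsupp.single_le_iff.mpr hj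
  set c := d - Finsupp.single j s with hc
  have h1 : Finsupp.single j s + c = d := by
    rw [hc, add_comm]; exact tsub_add_cancel_of_le hle
  have hdc : s + Finsupp.degree c = Finsupp.degree d := by
    have := degree_add (Finsupp.single j s) c
    rw [h1, degree_single] at this
    omega
  have hcn : n ≤ Finsupp.degree c := by nlinarith
  obtain ⟨b, hb, hbd⟩ := exists_le_degree hcn
  refine ⟨Finsupp.single j s + b, ⟨Finsupp.single j s, ⟨j, rfl⟩, b, hbd, rfl⟩, ?_⟩
  calc Finsupp.single j s + b ≤ Finsupp.single j s + c := add_le_add le_rfl hb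
    _ = d := h1




lemma monomial_not_mem_mI {T : Set (Fin r →₀ ℕ)}
    (hup : ∀ ⦃d e : Fin r →₀ ℕ⦄, d ∈ T → d ≤ e → e ∈ T) {d : Fin r →₀ ℕ} (hd : d ∉ T) :
    monomial d (1 : k) ∉ mI k r T := by
  classical
  rw [mem_mI]
  push_neg
  refine ⟨d, ?_, ?_⟩
  · rw [MvPolynomial.support_monomial, if_neg one_ne_zero]; exact Finset.mem_singleton_self d
  · intro e he hle
    exact absurd (hup he hle) hd

lemma exists_chain :
    ∀ (c : ℕ) (T : Set (Fin r →₀ ℕ)) (B : Finset (Fin r →₀ ℕ)),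
      (∀ ⦃d e : Fin r →₀ ℕ⦄, d ∈ T → d ≤ e → e ∈ T) → (∀ d, d ∈ B ↔ d ∉ T) → B.card = c →
      ∃ p : LTSeries (Ideal (MvPolynomial (Fin r) k)),
        p.head = mI k r T ∧ p.last = ⊤ ∧ p.length = c := by
  intro c
  induction c with
  | zero =>
    intro T B hup hB hc
    have hT : mI k r T = ⊤ := by
      apply mI_top
      by_contra h0
      have : (0 : Fin r →₀ ℕ) ∈ B := (hB 0).mpr h0
      rw [Finset.card_eq_zero] at hc
      simp [hc] at this
    exact ⟨RelSeries.singleton _ ⊤, by simp [hT], by simp, rfl⟩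
  | succ c ih =>
    intro T B hup hB hc
    have hne : B.Nonempty := by rw [← Finset.card_pos]; omega
    obtain ⟨d₀, hd₀B, hd₀max⟩ := Finset.exists_max_image B Finsupp.degree hne
    have hd₀T : d₀ ∉ T := (hB d₀).mp hd₀B
    set T' := T ∪ {d₀} with hT'
    have hup' : ∀ ⦃d e : Fin r →₀ ℕ⦄, d ∈ T' → d ≤ e → e ∈ T' := by
      rintro d e (hd | hd) hde
      · exact Or.inl (hup hd hde)
      · rcases eq_or_lt_of_le hde with rfl | hlt
        · exact Or.inr hd
        · simp only [Set.mem_singleton_iff] at hd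
          subst hd
          left
          by_contra heT
          have heB : e ∈ B := (hB e).mpr heT
          have := hd₀max e heB
          have := degree_lt_of_lt hlt
          omega
    have hB' : ∀ d, d ∈ B.erase d₀ ↔ d ∉ T' := by
      intro d
      rw [Finset.mem_erase, hB d, hT']
      simp only [Set.mem_union, Set.mem_singleton_iff]
      constructor
      · rintro ⟨h1, h2⟩ (h | h) <;> [exact h2 h; exact h1 h]
      · intro h
        push_neg at h
        exact ⟨h.2, h.1⟩
    obtain ⟨q, hq1, hq2, hq3⟩ := ih T' (B.erase d₀) hup' hB'
      (by rw [Finset.card_erase_of_mem hd₀B, hc]; omega)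
    have hlt : mI k r T < mI k r T' := by
      refine lt_of_le_of_ne (mI_le fun e he => ⟨e, Or.inl he, le_rfl⟩) ?_
      intro heq
      have h1 : monomial d₀ (1 : k) ∈ mI k r T' :=
        monomial_mem_mI ⟨d₀, Or.inr rfl, le_rfl⟩
      rw [← heq] at h1
      exact monomial_not_mem_mI hup hd₀T h1
    refine ⟨q.cons (mI k r T) (by rw [hq1]; exact hlt), ?_, ?_, ?_⟩
    · simp
    · rw [RelSeries.last_cons, hq2]
    · simp [hq3]




lemma mem_mI_up {T : Set (Fin r →₀ ℕ)}
    (hup : ∀ ⦃d e : Fin r →₀ ℕ⦄, d ∈ T → d ≤ e → e ∈ T) {p : MvPolynomial (Fin r) k} :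
    p ∈ mI k r T ↔ ∀ d ∈ p.support, d ∈ T := by
  rw [mem_mI]
  refine forall₂_congr fun d _ => ⟨?_, fun h => ⟨d, h, le_rfl⟩⟩
  rintro ⟨e, he, hle⟩
  exact hup he hle

/-- The `k`-linear equivalence between the quotient and functions on the complement. -/
lemma finrank_quot_mI (T : Set (Fin r →₀ ℕ)) (B : Finset (Fin r →₀ ℕ))
    (hup : ∀ ⦃d e : Fin r →₀ ℕ⦄, d ∈ T → d ≤ e → e ∈ T) (hB : ∀ d, d ∈ B ↔ d ∉ T) :
    Nonempty ((MvPolynomial (Fin r) k ⧸ mI k r T) ≃ₗ[k] ({x // x ∈ B} → k)) := by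
  classical
  set J := mI k r T with hJ
  set ψ : MvPolynomial (Fin r) k →ₗ[k] ({x // x ∈ B} → k) :=
    LinearMap.pi (fun b => MvPolynomial.lcoeff k (b : Fin r →₀ ℕ)) with hψ
  have hker : LinearMap.ker ψ = J.restrictScalars k := by
    ext p
    simp only [LinearMap.mem_ker, Submodule.restrictScalars_mem, hψ]
    rw [_root_.funext_iff]
    simp only [LinearMap.pi_apply, MvPolynomial.lcoeff_apply, Pi.zero_apply]
    rw [hJ, mem_mI_up hup]
    constructor
    · intro h d hd
      by_contra hdT
      have : MvPolynomial.coeff d p = 0 := h ⟨d, (hB d).mpr hdT⟩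
      rw [MvPolynomial.mem_support_iff] at hd
      exact hd this
    · rintro h ⟨d, hd⟩
      by_contra h0
      have : d ∈ p.support := MvPolynomial.mem_support_iff.mpr h0
      exact (hB d).mp hd (h d this)
  have hsurj : Function.Surjective ψ := by
    intro v
    refine ⟨∑ b ∈ B.attach, MvPolynomial.monomial b.1 (v ⟨b.1, b.2⟩), ?_⟩
    ext ⟨d, hd⟩
    simp only [hψ, LinearMap.pi_apply, MvPolynomial.lcoeff_apply, map_sum]
    rw [Finset.sum_eq_single (⟨d, hd⟩ : {x // x ∈ B})]
    · simp [MvPolynomial.coeff_monomial]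
    · rintro ⟨b, hb⟩ - hne
      rw [MvPolynomial.coeff_monomial, if_neg]
      intro h
      exact hne (by simpa using h)
    · intro h
      exact absurd (Finset.mem_attach _ _) h
  refine ⟨(Submodule.Quotient.restrictScalarsEquiv k J).symm.trans
    (LinearEquiv.ofBijective ((J.restrictScalars k).liftQ ψ hker.ge) ⟨?_, ?_⟩)⟩
  · rw [← LinearMap.ker_eq_bot]
    exact Submodule.ker_liftQ_eq_bot _ _ _ hker.le
  · intro v
    obtain ⟨p, hp⟩ := hsurj v
    exact ⟨Submodule.Quotient.mk p, by rwa [Submodule.liftQ_apply]⟩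




theorem flength_quot_mI (T : Set (Fin r →₀ ℕ)) (B : Finset (Fin r →₀ ℕ))
    (hup : ∀ ⦃d e : Fin r →₀ ℕ⦄, d ∈ T → d ≤ e → e ∈ T) (hB : ∀ d, d ∈ B ↔ d ∉ T) :
    (WithBot.unbotD 0 (Order.krullDim (Submodule (MvPolynomial (Fin r) k)
      (MvPolynomial (Fin r) k ⧸ mI k r T)))).toNat = B.card := by
  classical
  set S := MvPolynomial (Fin r) k
  set J := mI k r T with hJ
  set M := S ⧸ J
  obtain ⟨e⟩ := finrank_quot_mI (k := k) T B hup hB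
  have hfd : FiniteDimensional k M := Module.Finite.equiv e.symm
  have hfr : Module.finrank k M = B.card := by
    rw [e.finrank_eq, Module.finrank_pi k, Fintype.card_coe]
  -- upper bound
  have hup' : ∀ q : LTSeries (Submodule S M), q.length ≤ B.card := by
    intro q
    have hf : StrictMono (fun N : Submodule S M => Module.finrank k (N.restrictScalars k)) := by
      intro N N' h
      apply Submodule.finrank_lt_finrank_of_lt
      refine lt_of_le_of_ne (fun x hx => ?_) (fun heq => ?_)
      · rw [Submodule.restrictScalars_mem] at hx ⊢
        exact h.le hx
      · exact h.ne (Submodule.restrictScalars_injective k _ _ heq)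
    have h2 := (q.map _ hf).head_add_length_le_nat
    rw [LTSeries.last_map] at h2
    have hlen : (q.map _ hf).length = q.length := rfl
    have h3 : Module.finrank k ((q.last).restrictScalars k) ≤ Module.finrank k M :=
      Submodule.finrank_le _
    omega
  -- lower bound chain
  obtain ⟨p, hp1, hp2, hp3⟩ := exists_chain (k := k) B.card T B hup hB rfl
  have hJle : ∀ i, J ≤ p i := by
    intro i
    rw [hJ, ← hp1]
    exact p.monotone (Fin.zero_le i)
  have hsupJ : ∀ i, J ⊔ p i = p i := fun i => sup_comm J (p i) ▸ sup_eq_left.mpr (hJle i)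
  set q : LTSeries (Submodule S M) :=
    { length := p.length
      toFun := fun i => Submodule.map J.mkQ (p i)
      step := by
        intro i
        refine lt_of_le_of_ne (Submodule.map_mono (p.step i).le) (fun heq => ?_)
        have hcomap := congrArg (Submodule.comap J.mkQ) heq
        rw [Submodule.comap_map_mkQ, Submodule.comap_map_mkQ, hsupJ, hsupJ] at hcomap
        exact (p.step i).ne hcomap } with hq
  -- krull dimension
  have hkrull : Order.krullDim (Submodule S M) = (B.card : ℕ∞) := by
    refine le_antisymm ?_ ?_
    · rw [Order.krullDim_eq_iSup_length]
      refine WithBot.coe_le_coe.mpr (iSup_le fun q' => ?_)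
      exact_mod_cast hup' q'
    · have := Order.LTSeries.length_le_krullDim q
      have hql : q.length = B.card := hp3
      rw [hql] at this
      exact_mod_cast this
  rw [hkrull]
  simp




lemma sum_mI {α : ℕ} (A : Finset (Fin α)) (E : Fin α → Set (Fin r →₀ ℕ)) :
    ∑ i ∈ A, mI k r (E i) = mI k r (⋃ i ∈ A, E i) := by
  classical
  induction A using Finset.induction with
  | empty => simp [mI]
  | insert a s h ih =>
    rw [Finset.sum_insert h, ih, eq_comm]
    rw [Finset.set_biUnion_insert, mI_union]

lemma iInf_mI {α : ℕ} (E : Fin α → Set (Fin r →₀ ℕ)) :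
    (⨅ i, mI k r (E i)) = mI k r {d | ∀ i, ∃ e ∈ E i, e ≤ d} := by
  ext p
  rw [Submodule.mem_iInf, mem_mI]
  simp only [mem_mI]
  constructor
  · intro h d hd
    exact ⟨d, fun i => h i d hd, le_rfl⟩
  · rintro h i d hd
    obtain ⟨e, he, hle⟩ := h d hd
    obtain ⟨e', he', hle'⟩ := he i
    exact ⟨e', he', hle'.trans hle⟩

end Stmt4Aux

open Stmt4Aux in
/-- Let `S = k[x₁,…,x_r]`, `m = (x₁,…,x_r)`, and `P₁,…,P_α`
(`α ≥ 2`) distinct ideals each generated by a subset of the variables, and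
`I = P₁ ∩ ⋯ ∩ P_α`. Then for all `s ≥ 1` and `n ≥ 0`,
`ℓ(S/(I + m^{[s]} m^n)) = Σ_{∅ ≠ A ⊆ {1,…,α}} (-1)^{|A|+1} ℓ(S/((Σ_{i∈A} P_i) + m^{[s]} m^n))`,
where `m^{[s]} = (x₁^s, …, x_r^s)`. -/
theorem stmt4 (k : Type*) [Field k] (r α : ℕ) (hα : 2 ≤ α)
    (P : Fin α → Ideal (MvPolynomial (Fin r) k))
    (hP : ∀ i, ∃ V : Set (Fin r), P i = Ideal.span (MvPolynomial.X '' V))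
    (hdist : Function.Injective P)
    (m frob : Ideal (MvPolynomial (Fin r) k))
    (hm : m = Ideal.span (Set.range MvPolynomial.X))
    (s n : ℕ) (hs : 1 ≤ s)
    (hfrob : frob = Ideal.span (Set.range fun i => MvPolynomial.X i ^ s)) :
    (flength (MvPolynomial (Fin r) k)
        (MvPolynomial (Fin r) k ⧸ ((⨅ i, P i) + frob * m ^ n)) : ℤ) =
      ∑ A ∈ Finset.univ.powerset.filter (fun A : Finset (Fin α) => A.Nonempty),
        (-1 : ℤ) ^ (A.card + 1) *
          (flength (MvPolynomial (Fin r) k)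
            (MvPolynomial (Fin r) k ⧸ ((∑ i ∈ A, P i) + frob * m ^ n)) : ℤ) := by
  classical
  choose V hV using hP
  set E : Fin α → Set (Fin r →₀ ℕ) := fun i => (fun j => Finsupp.single j 1) '' V i with hE
  have hPE : ∀ i, P i = mI k r (E i) := fun i => by rw [hV i, span_X_eq_mI]
  have hFm : frob * m ^ n = mI k r (genF r s n) := frob_mul_pow_eq_mI s n m frob hm hfrob
  have hWfin := Wset_finite (r := r) s n hs
  set W : Finset (Fin r →₀ ℕ) := hWfin.toFinset with hW
  have hWmem : ∀ d, d ∈ W ↔ ¬ ∃ e ∈ genF r s n, e ≤ d := by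
    intro d; rw [hW, Set.Finite.mem_toFinset]; rfl
  set C : Fin α → Finset (Fin r →₀ ℕ) :=
    fun i => W.filter (fun d => ¬ ∃ e ∈ E i, e ≤ d) with hC
  -- the terms on the right-hand side
  have hterm : ∀ A : Finset (Fin α), A.Nonempty →
      (flength (MvPolynomial (Fin r) k)
        (MvPolynomial (Fin r) k ⧸ ((∑ i ∈ A, P i) + frob * m ^ n)) : ℤ)
      = ((W.filter fun d => ∀ i ∈ A, ¬ ∃ e ∈ E i, e ≤ d).card : ℤ) := by
    intro A hA
    have hIdeal : (∑ i ∈ A, P i) + frob * m ^ n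
        = mI k r (upClose ((⋃ i ∈ A, E i) ∪ genF r s n)) := by
      rw [mI_upClose,
        show (∑ i ∈ A, P i) = ∑ i ∈ A, mI k r (E i) from
          Finset.sum_congr rfl fun i _ => hPE i,
        sum_mI, hFm, mI_union]
    rw [hIdeal]
    have hcount := flength_quot_mI (k := k)
      (upClose ((⋃ i ∈ A, E i) ∪ genF r s n))
      (W.filter fun d => ∀ i ∈ A, ¬ ∃ e ∈ E i, e ≤ d)
      upClose_up ?_
    · unfold flength
      exact_mod_cast hcount
    · intro d
      rw [Finset.mem_filter, hWmem d]
      show _ ∧ _ ↔ ¬ ∃ e ∈ _ ∪ _, e ≤ d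
      constructor
      · rintro ⟨h1, h2⟩ ⟨e, he | he, hle⟩
        · obtain ⟨i, hi, hei⟩ : ∃ i ∈ A, e ∈ E i := by simpa using he
          exact h2 i hi ⟨e, hei, hle⟩
        · exact h1 ⟨e, he, hle⟩
      · intro h
        refine ⟨fun ⟨e, he, hle⟩ => h ⟨e, Or.inr he, hle⟩,
          fun i hi ⟨e, he, hle⟩ => h ⟨e, Or.inl ?_, hle⟩⟩
        simpa using ⟨i, hi, he⟩
  -- the left-hand side
  have hlhs : (flength (MvPolynomial (Fin r) k)
      (MvPolynomial (Fin r) k ⧸ ((⨅ i, P i) + frob * m ^ n)) : ℤ)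
      = ((Finset.univ.biUnion C).card : ℤ) := by
    have hIdeal : (⨅ i, P i) + frob * m ^ n
        = mI k r (upClose ({d | ∀ i, ∃ e ∈ E i, e ≤ d} ∪ genF r s n)) := by
      rw [mI_upClose, show (⨅ i, P i) = ⨅ i, mI k r (E i) from iInf_congr hPE,
        iInf_mI, hFm, mI_union]
    rw [hIdeal]
    have hcount := flength_quot_mI (k := k)
      (upClose ({d | ∀ i, ∃ e ∈ E i, e ≤ d} ∪ genF r s n))
      (Finset.univ.biUnion C) upClose_up ?_
    · unfold flength
      exact_mod_cast hcount
    · intro d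
      rw [Finset.mem_biUnion]
      show _ ↔ ¬ ∃ e ∈ _ ∪ _, e ≤ d
      constructor
      · rintro ⟨i, -, hdC⟩ ⟨e, he | he, hle⟩
        · rw [hC, Finset.mem_filter, hWmem d] at hdC
          obtain ⟨e', he', hle'⟩ := he i
          exact hdC.2 ⟨e', he', hle'.trans hle⟩
        · rw [hC, Finset.mem_filter, hWmem d] at hdC
          exact hdC.1 ⟨e, he, hle⟩
      · intro h
        have hdW : d ∈ W := by
          rw [hWmem d]
          exact fun ⟨e, he, hle⟩ => h ⟨e, Or.inr he, hle⟩
        have : ¬ ∀ i, ∃ e ∈ E i, e ≤ d := fun hall =>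
          h ⟨d, Or.inl hall, le_rfl⟩
        push_neg at this
        obtain ⟨i, hi⟩ := this
        exact ⟨i, Finset.mem_univ i, by rw [hC, Finset.mem_filter]; exact ⟨hdW, by push_neg; exact hi⟩⟩
  -- the intersections of the complements
  have hinf : ∀ (A : Finset (Fin α)) (hA : A.Nonempty),
      A.inf' hA C = W.filter (fun d => ∀ i ∈ A, ¬ ∃ e ∈ E i, e ≤ d) := by
    intro A hA
    induction hA using Finset.Nonempty.cons_induction with
    | singleton a =>
      rw [Finset.inf'_singleton]
      ext d
      simp [hC]
    | cons a A ha hA ih =>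
      rw [Finset.inf'_cons hA, ih]
      ext d
      rw [Finset.inf_eq_inter, Finset.mem_inter]
      simp only [hC, Finset.mem_filter, Finset.mem_cons]
      constructor
      · rintro ⟨⟨hW1, h1⟩, -, h2⟩
        exact ⟨hW1, by rintro i (rfl | hi); exacts [h1, h2 i hi]⟩
      · rintro ⟨hW1, h⟩
        exact ⟨⟨hW1, h a (Or.inl rfl)⟩, hW1, fun i hi => h i (Or.inr hi)⟩
  -- inclusion–exclusion
  rw [hlhs, Finset.inclusion_exclusion_card_biUnion Finset.univ C]
  have h1 : ∑ t : {x // x ∈ Finset.univ.powerset.filter (fun A : Finset (Fin α) => A.Nonempty)},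
      ((-1 : ℤ) ^ (t.1.card + 1) *
        ((t.1.inf' (Finset.mem_filter.mp t.2).2 C).card : ℤ))
      = ∑ t : {x // x ∈ Finset.univ.powerset.filter (fun A : Finset (Fin α) => A.Nonempty)},
      ((-1 : ℤ) ^ (t.1.card + 1) *
        ((W.filter fun d => ∀ i ∈ t.1, ¬ ∃ e ∈ E i, e ≤ d).card : ℤ)) := by
    refine Finset.sum_congr rfl fun t _ => ?_
    rw [hinf t.1 (Finset.mem_filter.mp t.2).2]
  rw [h1]
  have h2 := Finset.sum_coe_sort
    (Finset.univ.powerset.filter (fun A : Finset (Fin α) => A.Nonempty))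
    (fun A => ((-1 : ℤ) ^ (A.card + 1) *
      ((W.filter fun d => ∀ i ∈ A, ¬ ∃ e ∈ E i, e ≤ d).card : ℤ)))
  refine h2.trans (Finset.sum_congr rfl fun A hA => ?_)
  rw [hterm A (Finset.mem_filter.mp hA).2]
end

section
/- Let R be a commutative ring and I = (a_1,…,a_g) an ideal with a fixed generating set. Let R(I) = ⊕_{n≥0} I^n t^n ⊆ R[t] be the Rees algebra of I, and for an integer s ≥ 1 let 𝔞 be the ideal of R(I) generated by a_1^s,…,a_g^s together with a_1^s t^s,…,a_g^s t^s. Then for every n ≥ 0, the intersection of 𝔞 with the degree-n component I^n t^n of R(I) equals I^{[s]} I^n t^n if 0 ≤ n < s, and equals I^{[s]} I^{n-s} t^n if n ≥ s. -/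
/-!
Let `d m = m` for `m < s` and `d m = m - s` otherwise. Since `d (i + j) ≤ i + d j`, the elements of
`R(I)` whose `m`-th coefficient lies in `I^{[s]} I^{d m}` form an ideal; it contains the generators
of `𝔞`, which sit in degrees `0` and `s` where `d` vanishes, so `𝔞 ∩ Iⁿtⁿ ⊆ I^{[s]} I^{d n} tⁿ`.
Conversely, multiplying `aᵢˢ` by `r tⁿ` and `aᵢˢ tˢ` by `r tⁿ⁻ˢ` gives the reverse inclusion.
-/

open Polynomial

namespace reesAlgebra

variable {R : Type*} [CommRing R] {I : Ideal R}

/-- `degreeIdeal 𝔟 n · tⁿ = 𝔟 ∩ Iⁿtⁿ`. -/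
def degreeIdeal (𝔟 : Ideal (reesAlgebra I)) (n : ℕ) : Ideal R where
  carrier := {r | ∃ f ∈ 𝔟, (f : R[X]) = monomial n r}
  zero_mem' := ⟨0, zero_mem _, by simp⟩
  add_mem' := by
    rintro r r' ⟨f, hf, hfr⟩ ⟨f', hf', hf'r⟩
    exact ⟨f + f', add_mem hf hf', by simp [hfr, hf'r]⟩
  smul_mem' c := by
    rintro r ⟨f, hf, hfr⟩
    refine ⟨algebraMap R _ c * f, Ideal.mul_mem_left _ _ hf, ?_⟩
    simp [hfr, C_mul_monomial]

theorem mk_monomial_mem_iff {𝔟 : Ideal (reesAlgebra I)} {n : ℕ} {r : R}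
    (hr : monomial n r ∈ reesAlgebra I) :
    (⟨monomial n r, hr⟩ : reesAlgebra I) ∈ 𝔟 ↔ r ∈ degreeIdeal 𝔟 n := by
  refine ⟨fun h => ⟨_, h, rfl⟩, ?_⟩
  rintro ⟨f, hf, hfr⟩
  rwa [show f = ⟨monomial n r, hr⟩ from Subtype.ext hfr] at hf

theorem degreeIdeal_mul_pow_le (𝔟 : Ideal (reesAlgebra I)) (k m : ℕ) :
    degreeIdeal 𝔟 k * I ^ m ≤ degreeIdeal 𝔟 (k + m) := by
  refine Ideal.mul_le.2 fun r ⟨f, hf, hfr⟩ b hb => ?_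
  exact ⟨f * ⟨monomial m b, monomial_mem.2 hb⟩, Ideal.mul_mem_right _ _ hf,
    by simp [hfr, monomial_mul_monomial]⟩

def coeffIdeal (c : ℕ → Ideal R) (hc : ∀ i j, I ^ i * c j ≤ c (i + j)) :
    Ideal (reesAlgebra I) where
  carrier := {f | ∀ m, (f : R[X]).coeff m ∈ c m}
  zero_mem' m := by simp
  add_mem' hf hg m := by simpa using add_mem (hf m) (hg m)
  smul_mem' f g hg m := by
    rw [smul_eq_mul, MulMemClass.coe_mul, coeff_mul]
    refine sum_mem fun ⟨i, j⟩ hij => ?_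
    rw [Finset.HasAntidiagonal.mem_antidiagonal] at hij
    subst hij
    exact hc i j (Ideal.mul_mem_mul (f.2 i) (hg j))

theorem degreeIdeal_le_of_le_coeffIdeal {𝔟 : Ideal (reesAlgebra I)} {c : ℕ → Ideal R}
    {hc : ∀ i j, I ^ i * c j ≤ c (i + j)} (h : 𝔟 ≤ coeffIdeal c hc) (n : ℕ) :
    degreeIdeal 𝔟 n ≤ c n := by
  rintro r ⟨f, hf, hfr⟩
  simpa [hfr] using h hf n

section ConstAndShift

theorem pow_mul_mul_pow_shift_le (J : Ideal R) (s i j : ℕ) :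
    I ^ i * (J * I ^ (if j < s then j else j - s)) ≤
      J * I ^ (if i + j < s then i + j else i + j - s) := by
  rw [mul_left_comm, ← pow_add]
  exact Ideal.mul_mono_right (Ideal.pow_le_pow_right (by split_ifs <;> omega))

variable {ι : Type*} (b : ι → R) (s : ℕ)

variable (I) in
noncomputable abbrev spanConstAndShift : Ideal (reesAlgebra I) :=
  Ideal.span {y : reesAlgebra I |
    (∃ i, (y : R[X]) = C (b i)) ∨ (∃ i, (y : R[X]) = C (b i) * X ^ s)}

theorem spanConstAndShift_le_coeffIdeal :
    spanConstAndShift I b s ≤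
      coeffIdeal _ (pow_mul_mul_pow_shift_le (Ideal.span (Set.range b)) s) := by
  have coeff_monomial_mem (i : ι) (k : ℕ) (hk : (if k < s then k else k - s) = 0) (m : ℕ) :
      (monomial k (b i)).coeff m ∈ Ideal.span (Set.range b) * I ^ (if m < s then m else m - s) := by
    rcases eq_or_ne k m with rfl | hkm
    · rw [coeff_monomial_same, hk, pow_zero, mul_one]
      exact Ideal.subset_span ⟨i, rfl⟩
    · rw [coeff_monomial_of_ne _ hkm.symm]
      exact zero_mem _
  refine Ideal.span_le.2 ?_
  rintro y (⟨i, hy⟩ | ⟨i, hy⟩) m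
  · rw [hy, ← monomial_zero_left]
    exact coeff_monomial_mem i 0 (by simp) m
  · rw [hy, C_mul_X_pow_eq_monomial]
    exact coeff_monomial_mem i s (by simp) m

theorem span_mul_pow_shift_le_degreeIdeal (hb : ∀ i, b i ∈ I ^ s) (n : ℕ) :
    Ideal.span (Set.range b) * I ^ (if n < s then n else n - s) ≤
      degreeIdeal (spanConstAndShift I b s) n := by
  set 𝔞 := spanConstAndShift I b s
  have span_le_degree_zero : Ideal.span (Set.range b) ≤ degreeIdeal 𝔞 0 := by
    refine Ideal.span_le.2 ?_
    rintro _ ⟨i, rfl⟩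
    exact ⟨algebraMap R _ (b i), Ideal.subset_span (Or.inl ⟨i, rfl⟩), by simp⟩
  have span_le_degree_s : Ideal.span (Set.range b) ≤ degreeIdeal 𝔞 s := by
    refine Ideal.span_le.2 ?_
    rintro _ ⟨i, rfl⟩
    exact ⟨⟨monomial s (b i), monomial_mem.2 (hb i)⟩,
      Ideal.subset_span (Or.inr ⟨i, C_mul_X_pow_eq_monomial.symm⟩), rfl⟩
  split_ifs with hn
  · simpa using (Ideal.mul_mono_left span_le_degree_zero).trans (degreeIdeal_mul_pow_le 𝔞 0 n)
  · have := (Ideal.mul_mono_left span_le_degree_s).trans (degreeIdeal_mul_pow_le 𝔞 s (n - s))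
    rwa [Nat.add_sub_cancel' (not_lt.1 hn)] at this

theorem degreeIdeal_spanConstAndShift (hb : ∀ i, b i ∈ I ^ s) (n : ℕ) :
    degreeIdeal (spanConstAndShift I b s) n =
      Ideal.span (Set.range b) * I ^ (if n < s then n else n - s) :=
  le_antisymm (degreeIdeal_le_of_le_coeffIdeal (spanConstAndShift_le_coeffIdeal b s) n)
    (span_mul_pow_shift_le_degreeIdeal b s hb n)

end ConstAndShift

end reesAlgebra

theorem stmt5_general (R : Type*) [CommRing R] (g : ℕ) (a : Fin g → R) (I : Ideal R)
    (hI : I = Ideal.span (Set.range a)) (s : ℕ)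
    (𝔞 : Ideal (reesAlgebra I))
    (h𝔞 : 𝔞 = Ideal.span {y : reesAlgebra I |
      (∃ i, (y : R[X]) = Polynomial.C (a i ^ s)) ∨
      (∃ i, (y : R[X]) = Polynomial.C (a i ^ s) * Polynomial.X ^ s)}) :
    ∀ (n : ℕ) (r : R) (hr : r ∈ I ^ n),
      (n < s →
        ((⟨Polynomial.monomial n r, reesAlgebra.monomial_mem.mpr hr⟩ : reesAlgebra I) ∈ 𝔞 ↔
          r ∈ Ideal.span (Set.range fun i => a i ^ s) * I ^ n)) ∧
      (s ≤ n →
        ((⟨Polynomial.monomial n r, reesAlgebra.monomial_mem.mpr hr⟩ : reesAlgebra I) ∈ 𝔞 ↔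
          r ∈ Ideal.span (Set.range fun i => a i ^ s) * I ^ (n - s))) := by
  have ha_pow : ∀ i, a i ^ s ∈ I ^ s := fun i =>
    Ideal.pow_mem_pow (hI ▸ Ideal.subset_span ⟨i, rfl⟩) s
  intro n r hr
  subst h𝔞
  rw [reesAlgebra.mk_monomial_mem_iff,
    reesAlgebra.degreeIdeal_spanConstAndShift (fun i => a i ^ s) s ha_pow]
  exact ⟨fun hn => by rw [if_pos hn], fun hn => by rw [if_neg (not_lt.2 hn)]⟩

/-- Let `R` be a commutative ring and `I = (a₁,…,a_g)`.
Let `𝔞` be the ideal of the Rees algebra `R(I) ⊆ R[t]` generated by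
`a₁^s,…,a_g^s` and `a₁^s t^s,…,a_g^s t^s`. Then for every `n ≥ 0`, the
intersection of `𝔞` with the degree-`n` component `Iⁿ tⁿ` equals
`I^{[s]} Iⁿ tⁿ` if `0 ≤ n < s`, and `I^{[s]} I^{n-s} tⁿ` if `n ≥ s`: an element
`r tⁿ` (with `r ∈ Iⁿ`) of the degree-`n` component lies in `𝔞` iff
`r ∈ I^{[s]} Iⁿ` (resp. `r ∈ I^{[s]} I^{n-s}`). Here `I^{[s]} = (a₁^s,…,a_g^s)`. -/
theorem stmt5 (R : Type*) [CommRing R] (g : ℕ) (a : Fin g → R) (I : Ideal R)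
    (hI : I = Ideal.span (Set.range a)) (s : ℕ) (hs : 1 ≤ s)
    (𝔞 : Ideal (reesAlgebra I))
    (h𝔞 : 𝔞 = Ideal.span {y : reesAlgebra I |
      (∃ i, (y : R[X]) = Polynomial.C (a i ^ s)) ∨
      (∃ i, (y : R[X]) = Polynomial.C (a i ^ s) * Polynomial.X ^ s)}) :
    ∀ (n : ℕ) (r : R) (hr : r ∈ I ^ n),
      (n < s →
        ((⟨Polynomial.monomial n r, reesAlgebra.monomial_mem.mpr hr⟩ : reesAlgebra I) ∈ 𝔞 ↔
          r ∈ Ideal.span (Set.range fun i => a i ^ s) * I ^ n)) ∧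
      (s ≤ n →
        ((⟨Polynomial.monomial n r, reesAlgebra.monomial_mem.mpr hr⟩ : reesAlgebra I) ∈ 𝔞 ↔
          r ∈ Ideal.span (Set.range fun i => a i ^ s) * I ^ (n - s))) :=
  stmt5_general R g a I hI s 𝔞 h𝔞
end
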